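/- Let $x_1,\dots,x_m$ span $\mathbb{R}^n$, let $u^* \geq 0$ sum to 1 with $M(u^*) \succ 0$, and set $\alpha_i = x_i^T M(u^*)^{-2} x_i$ and $T = \operatorname{Trace}(M(u^*)^{-1})$. If $\alpha_i \leq T$ for all $i$ and $\alpha_i = T$ whenever $u^*_i > 0$, then for every $u \geq 0$ summing to 1 with $M(u) \succ 0$ we have $\operatorname{Trace}(M(u)^{-1}) \geq \operatorname{Trace}(M(u^*)^{-1})$. -/

import Mathlib

/-!
For `C` Hermitian and `B ≻ 0`, the trace of the positive semidefinite matrix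
`(C - B⁻¹)ᴴ B (C - B⁻¹) = C B C - 2 C + B⁻¹` gives the tangent-line inequality
`Tr B⁻¹ ≥ 2 Tr C - Tr (C B C)` of the convex map `B ↦ Tr B⁻¹`. With `C = M(u*)⁻¹` and
`B = M(u)` one has `Tr (C B C) = ∑ uᵢ αᵢ ≤ T`, hence `Tr M(u)⁻¹ ≥ 2T - T = T`.
-/

open Matrix

section TraceInverse

open scoped ComplexOrder

variable {n 𝕜 : Type*} [Fintype n] [DecidableEq n] [RCLike 𝕜]

theorem two_mul_trace_sub_trace_mul_mul_le_trace_inv {B C : Matrix n n 𝕜}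
    (hB : B.PosDef) (hC : C.IsHermitian) :
    2 * C.trace - (C * B * C).trace ≤ B⁻¹.trace := by
  have hdet : IsUnit B.det := B.isUnit_iff_isUnit_det.mp hB.isUnit
  have hexpand : (C - B⁻¹)ᴴ * B * (C - B⁻¹) = C * B * C - C - C + B⁻¹ := by
    rw [conjTranspose_sub, hC.eq, hB.isHermitian.inv.eq]
    have hdistrib : (C - B⁻¹) * B * (C - B⁻¹)
        = C * B * C - C * (B * B⁻¹) - (B⁻¹ * B) * C + (B⁻¹ * B) * B⁻¹ := by
      noncomm_ring
    rw [hdistrib, mul_nonsing_inv B hdet, nonsing_inv_mul B hdet, mul_one, one_mul, one_mul]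
  have hnonneg := (hB.posSemidef.conjTranspose_mul_mul_same (C - B⁻¹)).trace_nonneg
  rw [hexpand, trace_add, trace_sub, trace_sub] at hnonneg
  exact sub_nonneg.mp (by convert hnonneg using 1; ring)

end TraceInverse

theorem trace_mul_vecMulVec_mul {n R : Type*} [Fintype n] [CommSemiring R]
    (C : Matrix n n R) (a : n → R) :
    (C * vecMulVec a a * C).trace = a ⬝ᵥ (C * C) *ᵥ a := by
  rw [trace_mul_cycle, mul_vecMulVec, trace_vecMulVec, dotProduct_comm]

theorem stmt17_general {n m : ℕ} (x : Fin m → Fin n → ℝ)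
    (M : (Fin m → ℝ) → Matrix (Fin n) (Fin n) ℝ)
    (hM : ∀ v, M v = ∑ i, v i • vecMulVec (x i) (x i))
    (ustar : Fin m → ℝ)
    (hspd : (M ustar).PosDef)
    (hle : ∀ i, x i ⬝ᵥ ((M ustar)⁻¹ * (M ustar)⁻¹) *ᵥ x i ≤ ((M ustar)⁻¹).trace) :
    ∀ u : Fin m → ℝ, (∀ i, 0 ≤ u i) → ∑ i, u i = 1 → (M u).PosDef →
      ((M ustar)⁻¹).trace ≤ ((M u)⁻¹).trace := by
  intro u hu husum hpd
  set C := (M ustar)⁻¹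
  have hgrad : (C * M u * C).trace ≤ C.trace := calc
    (C * M u * C).trace = ∑ i, u i * (x i ⬝ᵥ (C * C) *ᵥ x i) := by
      simp only [hM u, Finset.mul_sum, Finset.sum_mul, Matrix.mul_smul, Matrix.smul_mul,
        trace_sum, trace_smul, trace_mul_vecMulVec_mul, smul_eq_mul]
    _ ≤ ∑ i, u i * C.trace :=
      Finset.sum_le_sum fun i _ => mul_le_mul_of_nonneg_left (hle i) (hu i)
    _ = C.trace := by rw [← Finset.sum_mul, husum, one_mul]
  linarith [two_mul_trace_sub_trace_mul_mul_le_trace_inv hpd hspd.isHermitian.inv]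

/-- sufficiency of the first-order optimality conditions for the
A-optimal design problem: if `αᵢ = xᵢᵀ M(u*)⁻² xᵢ ≤ T = Trace(M(u*)⁻¹)` for all `i`,
with equality whenever `u*ᵢ > 0`, then `u*` is a global minimizer of
`u ↦ Trace(M(u)⁻¹)` over the simplex. -/
theorem stmt17 {n m : ℕ} (x : Fin m → Fin n → ℝ)
    (hspan : Submodule.span ℝ (Set.range x) = ⊤)
    (M : (Fin m → ℝ) → Matrix (Fin n) (Fin n) ℝ)
    (hM : ∀ v, M v = ∑ i, v i • vecMulVec (x i) (x i))
    (ustar : Fin m → ℝ) (hus : ∀ i, 0 ≤ ustar i) (hssum : ∑ i, ustar i = 1)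
    (hspd : (M ustar).PosDef)
    (hle : ∀ i, x i ⬝ᵥ ((M ustar)⁻¹ * (M ustar)⁻¹) *ᵥ x i ≤ ((M ustar)⁻¹).trace)
    (heq : ∀ i, 0 < ustar i →
      x i ⬝ᵥ ((M ustar)⁻¹ * (M ustar)⁻¹) *ᵥ x i = ((M ustar)⁻¹).trace) :
    ∀ u : Fin m → ℝ, (∀ i, 0 ≤ u i) → ∑ i, u i = 1 → (M u).PosDef →
      ((M ustar)⁻¹).trace ≤ ((M u)⁻¹).trace :=
  stmt17_general x M hM ustar hspd hle
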